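/- Deutsch uncertainty principle for Parseval frames: Let {τ_j}_{j=1}^n and {ω_k}_{k=1}^m be two Parseval frames for a finite-dimensional Hilbert space H with ‖τ_j‖ ≤ 1 and ‖ω_k‖ ≤ 1 for all j, k. Then for every unit vector h with all ⟨h, τ_j⟩ and ⟨h, ω_k⟩ nonzero, S_τ(h) + S_ω(h) ≥ -2 log((1 + max_{j,k} |⟨τ_j, ω_k⟩|)/2), where S_τ(h) = Σ_j |⟨h, τ_j⟩|² log(1/|⟨h, τ_j⟩|²). -/

import Mathlib

/-!
Write `a_j = |⟨h, τ_j⟩|²` and `b_k = |⟨h, ω_k⟩|²`: both are probability vectors, and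
`S_τ(h) + S_ω(h)` is the Shannon entropy of the product distribution `a_j b_k`. Buzano's inequality
bounds `|⟨h, τ_j⟩| |⟨h, ω_k⟩|` by `(‖τ_j‖ ‖ω_k‖ + |⟨τ_j, ω_k⟩|) / 2 ≤ (1 + max |⟨τ_j, ω_k⟩|) / 2`, so
every weight of the product distribution is at most the square of that bound, and an entropy is at
least `-log` of any upper bound on the weights.
-/

open Real Finset
open scoped InnerProductSpace

section Buzano

variable {𝕜 E : Type*} [RCLike 𝕜] [NormedAddCommGroup E] [InnerProductSpace 𝕜 E]

theorem inner_reflection_span_singleton (h x y : E) :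
    ⟪x, (𝕜 ∙ h).reflection y⟫_𝕜 = 2 * (⟪h, y⟫_𝕜 / ((‖h‖ ^ 2 : ℝ) : 𝕜)) * ⟪x, h⟫_𝕜 - ⟪x, y⟫_𝕜 := by
  rw [Submodule.reflection_apply, Submodule.starProjection_singleton, inner_sub_right,
    two_smul, inner_add_right, inner_smul_right]
  ring

/-- Buzano's inequality: Cauchy–Schwarz for `x` and the reflection of `y` in the line `𝕜 ∙ h`,
followed by the triangle inequality. -/
theorem two_mul_norm_inner_mul_norm_inner_le (h x y : E) :
    2 * (‖⟪h, x⟫_𝕜‖ * ‖⟪h, y⟫_𝕜‖) ≤ ‖h‖ ^ 2 * (‖x‖ * ‖y‖ + ‖⟪x, y⟫_𝕜‖) := by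
  rcases eq_or_ne h 0 with rfl | hh
  · simp
  have hh2 : 0 < ‖h‖ ^ 2 := by positivity
  have hrefl : ‖2 * (⟪h, y⟫_𝕜 / ((‖h‖ ^ 2 : ℝ) : 𝕜)) * ⟪x, h⟫_𝕜 - ⟪x, y⟫_𝕜‖ ≤ ‖x‖ * ‖y‖ := by
    rw [← inner_reflection_span_singleton, ← (𝕜 ∙ h).reflection.norm_map y]
    exact norm_inner_le_norm _ _
  have hnorm : ‖2 * (⟪h, y⟫_𝕜 / ((‖h‖ ^ 2 : ℝ) : 𝕜)) * ⟪x, h⟫_𝕜‖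
      = 2 * (‖⟪h, x⟫_𝕜‖ * ‖⟪h, y⟫_𝕜‖) / ‖h‖ ^ 2 := by
    rw [norm_mul, norm_mul, norm_div, norm_inner_symm x h, RCLike.norm_ofNat,
      RCLike.norm_ofReal, abs_of_pos hh2]
    ring
  have htri := norm_le_norm_sub_add (2 * (⟪h, y⟫_𝕜 / ((‖h‖ ^ 2 : ℝ) : 𝕜)) * ⟪x, h⟫_𝕜) ⟪x, y⟫_𝕜
  rw [hnorm, div_le_iff₀ hh2] at htri
  nlinarith

end Buzano

theorem norm_inner_mul_norm_inner_le_of_norm_le_one {𝕜 E : Type*} [RCLike 𝕜]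
    [NormedAddCommGroup E] [InnerProductSpace 𝕜 E] {h x y : E}
    (hh : ‖h‖ = 1) (hx : ‖x‖ ≤ 1) (hy : ‖y‖ ≤ 1) :
    ‖⟪h, x⟫_𝕜‖ * ‖⟪h, y⟫_𝕜‖ ≤ (1 + ‖⟪x, y⟫_𝕜‖) / 2 := by
  have hxy : ‖x‖ * ‖y‖ ≤ 1 := mul_le_one₀ hx (norm_nonneg y) hy
  have hbuzano := two_mul_norm_inner_mul_norm_inner_le (𝕜 := 𝕜) h x y
  rw [hh, one_pow, one_mul] at hbuzano
  linarith

section Entropy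

variable {ι κ : Type*} [Fintype ι] [Fintype κ]

theorem mul_neg_log_le_negMulLog {x c : ℝ} (hx : 0 ≤ x) (hxc : x ≤ c) :
    x * -log c ≤ negMulLog x := by
  rcases hx.eq_or_lt with rfl | hx
  · simp
  rw [negMulLog, neg_mul, mul_neg, neg_le_neg_iff]
  exact mul_le_mul_of_nonneg_left (log_le_log hx hxc) hx.le

theorem neg_log_le_sum_negMulLog {p : ι → ℝ} {c : ℝ} (hp0 : ∀ i, 0 ≤ p i)
    (hp1 : ∑ i, p i = 1) (hpc : ∀ i, p i ≤ c) : -log c ≤ ∑ i, negMulLog (p i) :=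
  calc -log c = ∑ i, p i * -log c := by rw [← sum_mul, hp1, one_mul]
    _ ≤ ∑ i, negMulLog (p i) := sum_le_sum fun i _ => mul_neg_log_le_negMulLog (hp0 i) (hpc i)

theorem sum_negMulLog_mul_of_sum_eq_one {a : ι → ℝ} {b : κ → ℝ} (ha : ∑ i, a i = 1)
    (hb : ∑ k, b k = 1) :
    ∑ p : ι × κ, negMulLog (a p.1 * b p.2) = ∑ i, negMulLog (a i) + ∑ k, negMulLog (b k) := by
  simp only [Fintype.sum_prod_type, negMulLog_mul, sum_add_distrib, ← sum_mul, ← mul_sum, ha, hb,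
    one_mul]

theorem neg_log_le_sum_negMulLog_add_sum_negMulLog {a : ι → ℝ} {b : κ → ℝ} {c : ℝ}
    (ha0 : ∀ i, 0 ≤ a i) (hb0 : ∀ k, 0 ≤ b k) (ha1 : ∑ i, a i = 1) (hb1 : ∑ k, b k = 1)
    (habc : ∀ i k, a i * b k ≤ c) :
    -log c ≤ ∑ i, negMulLog (a i) + ∑ k, negMulLog (b k) := by
  rw [← sum_negMulLog_mul_of_sum_eq_one ha1 hb1]
  refine neg_log_le_sum_negMulLog (fun p => mul_nonneg (ha0 p.1) (hb0 p.2)) ?_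
    fun p => habc p.1 p.2
  simp only [Fintype.sum_prod_type, ← mul_sum, hb1, mul_one, ha1]

end Entropy

theorem deutsch_parseval_frames_general {𝕜 H : Type*} [RCLike 𝕜] [NormedAddCommGroup H]
    [InnerProductSpace 𝕜 H]
    {n m : ℕ}
    (τ : Fin n → H) (ω : Fin m → H)
    (hτ : ∀ x : H, ‖x‖ ^ 2 = ∑ j, ‖(inner 𝕜 x (τ j) : 𝕜)‖ ^ 2)
    (hω : ∀ x : H, ‖x‖ ^ 2 = ∑ k, ‖(inner 𝕜 x (ω k) : 𝕜)‖ ^ 2)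
    (hτ1 : ∀ j, ‖τ j‖ ≤ 1) (hω1 : ∀ k, ‖ω k‖ ≤ 1)
    (h : H) (hh : ‖h‖ = 1) :
    (∑ j, ‖(inner 𝕜 h (τ j) : 𝕜)‖ ^ 2 * Real.log (1 / ‖(inner 𝕜 h (τ j) : 𝕜)‖ ^ 2)) +
      (∑ k, ‖(inner 𝕜 h (ω k) : 𝕜)‖ ^ 2 * Real.log (1 / ‖(inner 𝕜 h (ω k) : 𝕜)‖ ^ 2)) ≥
      -2 * Real.log ((1 + ⨆ j, ⨆ k, ‖(inner 𝕜 (τ j) (ω k) : 𝕜)‖) / 2) := by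
  set B := ⨆ j, ⨆ k, ‖⟪τ j, ω k⟫_𝕜‖
  have hB : ∀ j k, ‖⟪τ j, ω k⟫_𝕜‖ ≤ B := fun j k =>
    (le_ciSup (f := fun k => ‖⟪τ j, ω k⟫_𝕜‖) (Set.finite_range _).bddAbove k).trans
      (le_ciSup (f := fun j => ⨆ k, ‖⟪τ j, ω k⟫_𝕜‖) (Set.finite_range _).bddAbove j)
  have hprod : ∀ j k, ‖⟪h, τ j⟫_𝕜‖ ^ 2 * ‖⟪h, ω k⟫_𝕜‖ ^ 2 ≤ ((1 + B) / 2) ^ 2 := by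
    intro j k
    rw [← mul_pow]
    gcongr
    calc _ ≤ (1 + ‖⟪τ j, ω k⟫_𝕜‖) / 2 :=
          norm_inner_mul_norm_inner_le_of_norm_le_one hh (hτ1 j) (hω1 k)
      _ ≤ (1 + B) / 2 := by gcongr; exact hB j k
  have hentropy := neg_log_le_sum_negMulLog_add_sum_negMulLog (fun j => by positivity)
    (fun k => by positivity) (by rw [← hτ h, hh, one_pow]) (by rw [← hω h, hh, one_pow]) hprod
  rw [log_pow] at hentropy
  simp only [one_div, log_inv, mul_neg, negMulLog, neg_mul] at hentropy ⊢
  push_cast at hentropy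
  linarith

theorem deutsch_parseval_frames {𝕜 H : Type*} [RCLike 𝕜] [NormedAddCommGroup H]
    [InnerProductSpace 𝕜 H] [FiniteDimensional 𝕜 H]
    {n m : ℕ} (hn : 0 < n) (hm : 0 < m)
    (τ : Fin n → H) (ω : Fin m → H)
    (hτ : ∀ x : H, ‖x‖ ^ 2 = ∑ j, ‖(inner 𝕜 x (τ j) : 𝕜)‖ ^ 2)
    (hω : ∀ x : H, ‖x‖ ^ 2 = ∑ k, ‖(inner 𝕜 x (ω k) : 𝕜)‖ ^ 2)
    (hτ1 : ∀ j, ‖τ j‖ ≤ 1) (hω1 : ∀ k, ‖ω k‖ ≤ 1)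
    (h : H) (hh : ‖h‖ = 1)
    (hhτ : ∀ j, (inner 𝕜 h (τ j) : 𝕜) ≠ 0) (hhω : ∀ k, (inner 𝕜 h (ω k) : 𝕜) ≠ 0) :
    (∑ j, ‖(inner 𝕜 h (τ j) : 𝕜)‖ ^ 2 * Real.log (1 / ‖(inner 𝕜 h (τ j) : 𝕜)‖ ^ 2)) +
      (∑ k, ‖(inner 𝕜 h (ω k) : 𝕜)‖ ^ 2 * Real.log (1 / ‖(inner 𝕜 h (ω k) : 𝕜)‖ ^ 2)) ≥
      -2 * Real.log ((1 + ⨆ j, ⨆ k, ‖(inner 𝕜 (τ j) (ω k) : 𝕜)‖) / 2) :=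
  deutsch_parseval_frames_general τ ω hτ hω hτ1 hω1 h hh
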